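/- arXiv:1701.02368 — 3 statements merged into one kernel-verified Lean document; each statement's English description precedes it below -/
import Mathlib

section
/- Suppose real numbers F_best, F_opt, f_best, OPT ≥ 0, constants 0 < δ₁, with δ₂ > (1 - 1/e)·δ₁, and a scaling λ > 0 satisfy: (i) F_best ≥ (1 - 1/e) · F_opt (greedy guarantee), (ii) λ · F_opt ≥ (1 - δ₁) · OPT (lower estimation accuracy), and (iii) λ · F_best - f_best ≤ (δ₂ - (1 - 1/e)·δ₁) · OPT (upper estimation accuracy). Then f_best ≥ (1 - 1/e - δ₂) · OPT. -/
/-- Chaining the estimation bounds through the greedy guarantee: the loss `c * δ₁ * OPT` from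
underestimating the optimum is exactly what the upper estimate has already paid for. -/
lemma le_of_greedy_of_estimation {c lam Fbest Fopt fbest OPT δ₁ δ₂ : ℝ} (hc : 0 ≤ c)
    (hlam : 0 ≤ lam) (hgreedy : c * Fopt ≤ Fbest) (hlower : (1 - δ₁) * OPT ≤ lam * Fopt)
    (hupper : lam * Fbest - fbest ≤ (δ₂ - c * δ₁) * OPT) :
    (c - δ₂) * OPT ≤ fbest :=
  calc (c - δ₂) * OPT = c * ((1 - δ₁) * OPT) - (δ₂ - c * δ₁) * OPT := by ring
    _ ≤ c * (lam * Fopt) - (δ₂ - c * δ₁) * OPT := by gcongr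
    _ = lam * (c * Fopt) - (δ₂ - c * δ₁) * OPT := by ring
    _ ≤ lam * Fbest - (δ₂ - c * δ₁) * OPT := by gcongr
    _ ≤ fbest := by linarith

lemma one_sub_one_div_exp_one_nonneg : 0 ≤ 1 - 1 / Real.exp 1 := by
  have : 1 / Real.exp 1 ≤ 1 := (div_le_one (Real.exp_pos 1)).mpr (Real.one_le_exp zero_le_one)
  linarith

theorem stmt_8_general (Fbest Fopt fbest OPT δ₁ δ₂ lam : ℝ)
    (hlam : 0 < lam)
    (hgreedy : Fbest ≥ (1 - 1 / Real.exp 1) * Fopt)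
    (hlower : lam * Fopt ≥ (1 - δ₁) * OPT)
    (hupper : lam * Fbest - fbest ≤ (δ₂ - (1 - 1 / Real.exp 1) * δ₁) * OPT) :
    fbest ≥ (1 - 1 / Real.exp 1 - δ₂) * OPT :=
  le_of_greedy_of_estimation one_sub_one_div_exp_one_nonneg hlam.le hgreedy hlower hupper

theorem stmt_8 (Fbest Fopt fbest OPT δ₁ δ₂ lam : ℝ)
    (hFbest : 0 ≤ Fbest) (hFopt : 0 ≤ Fopt) (hfbest : 0 ≤ fbest) (hOPT : 0 ≤ OPT)
    (hδ₁ : 0 < δ₁) (hδ₂ : δ₂ > (1 - 1 / Real.exp 1) * δ₁) (hlam : 0 < lam)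
    (hgreedy : Fbest ≥ (1 - 1 / Real.exp 1) * Fopt)
    (hlower : lam * Fopt ≥ (1 - δ₁) * OPT)
    (hupper : lam * Fbest - fbest ≤ (δ₂ - (1 - 1 / Real.exp 1) * δ₁) * OPT) :
    fbest ≥ (1 - 1 / Real.exp 1 - δ₂) * OPT :=
  stmt_8_general Fbest Fopt fbest OPT δ₁ δ₂ lam hlam hgreedy hlower hupper
end

section
/- Let F : Finset V → ℝ be monotone nondecreasing and submodular with F(∅) ≥ 0, over a finite ground set V. Let S' be the set obtained by k steps of greedy selection (at each step adding an element maximizing the marginal gain of F). Then for every S ⊆ V with |S| ≤ k, F(S') ≥ (1 - (1-1/k)^k) · F(S) ≥ (1 - 1/e) · F(S). -/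
/-!
Greedy maximization of a monotone submodular function. If the greedy set `A` misses the
optimum value `F S` by `g`, then adding the elements of `S` one at a time to `A` gains at
least `g`, and by submodularity each of these `≤ k` elements gains no more alone than it would
as the first one added to `A`, hence no more than the greedy choice. So the greedy step gains
at least `g / k`, the gap shrinks by a factor `1 - 1/k` per step, and `(1 - 1/k)^k ≤ 1/e`.
-/

open Finset

section Submodular

variable {V β : Type*} [DecidableEq V]

def HasDiminishingReturns [AddCommGroup β] [LE β] (F : Finset V → β) : Prop :=
  ∀ (S₁ S₂ : Finset V) (v : V), S₁ ⊆ S₂ → v ∉ S₂ →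
    F (insert v S₂) - F S₂ ≤ F (insert v S₁) - F S₁

theorem HasDiminishingReturns.sub_le_sum_sub [AddCommGroup β] [PartialOrder β]
    [IsOrderedAddMonoid β] {F : Finset V → β} (hF : HasDiminishingReturns F)
    (A T : Finset V) :
    F (A ∪ T) - F A ≤ ∑ v ∈ T, (F (insert v A) - F A) := by
  induction T using Finset.induction_on with
  | empty => simp
  | @insert x T hxT ih =>
    rw [sum_insert hxT, union_insert]
    by_cases hx : x ∈ A ∪ T
    · have hxA : x ∈ A := by simpa [hxT] using hx
      simpa [insert_eq_of_mem hx, insert_eq_of_mem hxA] using ih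
    · have hgain := hF A (A ∪ T) x subset_union_left hx
      calc F (insert x (A ∪ T)) - F A
          = (F (insert x (A ∪ T)) - F (A ∪ T)) + (F (A ∪ T) - F A) := by abel
        _ ≤ (F (insert x A) - F A) + ∑ v ∈ T, (F (insert v A) - F A) := add_le_add hgain ih

end Submodular

section Greedy

variable {V : Type*} [DecidableEq V] {F : Finset V → ℝ}

theorem sub_le_card_mul_greedy_gain (hmono : Monotone F) (hF : HasDiminishingReturns F)
    {A S : Finset V} {v : V} (hv : ∀ w, F (insert w A) ≤ F (insert v A)) :
    F S - F A ≤ #S * (F (insert v A) - F A) := by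
  calc F S - F A
      ≤ F (A ∪ S) - F A := by gcongr; exact hmono subset_union_right
    _ ≤ ∑ w ∈ S, (F (insert w A) - F A) := hF.sub_le_sum_sub A S
    _ ≤ #S • (F (insert v A) - F A) := sum_le_card_nsmul _ _ _ fun w _ => by
          linarith [hv w]
    _ = #S * (F (insert v A) - F A) := nsmul_eq_mul _ _

theorem greedy_gap_contracts (hmono : Monotone F) (hF : HasDiminishingReturns F)
    {k : ℕ} (hk : 1 ≤ k) {A S : Finset V} (hcard : #S ≤ k) {v : V}
    (hv : ∀ w, F (insert w A) ≤ F (insert v A)) :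
    F S - F (insert v A) ≤ (1 - 1 / (k : ℝ)) * (F S - F A) := by
  have hkpos : (0 : ℝ) < k := by exact_mod_cast hk
  have hgain : 0 ≤ F (insert v A) - F A := sub_nonneg.2 (hmono (subset_insert v A))
  have hcard' : (#S : ℝ) ≤ k := by exact_mod_cast hcard
  have hgap : F S - F A ≤ k * (F (insert v A) - F A) :=
    (sub_le_card_mul_greedy_gain hmono hF hv).trans (by gcongr)
  have hgain_ge : (F S - F A) / k ≤ F (insert v A) - F A := (div_le_iff₀' hkpos).2 hgap
  calc F S - F (insert v A) ≤ (F S - F A) - (F S - F A) / k := by linarith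
    _ = (1 - 1 / (k : ℝ)) * (F S - F A) := by ring

theorem greedy_gap_le_pow (hmono : Monotone F) (hF : HasDiminishingReturns F)
    {k : ℕ} (hk : 1 ≤ k) {S : Finset V} (hcard : #S ≤ k) (Sg : ℕ → Finset V)
    (hstep : ∀ j < k, ∃ v : V, Sg (j + 1) = insert v (Sg j) ∧
      ∀ w : V, F (insert w (Sg j)) ≤ F (insert v (Sg j))) :
    ∀ j ≤ k, F S - F (Sg j) ≤ (1 - 1 / (k : ℝ)) ^ j * (F S - F (Sg 0)) := by
  intro j hj
  induction j with
  | zero => simp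
  | succ j ih =>
    obtain ⟨v, hSg, hv⟩ := hstep j hj
    rw [hSg, pow_succ', mul_assoc]
    exact (greedy_gap_contracts hmono hF hk hcard hv).trans
      (mul_le_mul_of_nonneg_left (ih (by omega)) (Nat.one_sub_one_div_cast_nonneg k))

end Greedy

theorem stmt_14_general {V : Type*} [DecidableEq V]
    (F : Finset V → ℝ)
    (hmono : ∀ S₁ S₂ : Finset V, S₁ ⊆ S₂ → F S₁ ≤ F S₂)
    (hsub : ∀ (S₁ S₂ : Finset V) (v : V), S₁ ⊆ S₂ → v ∉ S₂ →
      F (insert v S₁) - F S₁ ≥ F (insert v S₂) - F S₂)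
    (h0 : 0 ≤ F ∅)
    (k : ℕ) (hk : 1 ≤ k)
    (Sg : ℕ → Finset V) (hS0 : Sg 0 = ∅)
    (hstep : ∀ j < k, ∃ v : V, Sg (j + 1) = insert v (Sg j) ∧
      ∀ w : V, F (insert w (Sg j)) ≤ F (insert v (Sg j)))
    (S : Finset V) (hcard : S.card ≤ k) :
    F (Sg k) ≥ (1 - (1 - 1 / (k : ℝ)) ^ k) * F S ∧
      (1 - (1 - 1 / (k : ℝ)) ^ k) * F S ≥ (1 - 1 / Real.exp 1) * F S := by
  have hmono' : Monotone F := fun S₁ S₂ h => hmono S₁ S₂ h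
  have hFS : 0 ≤ F S := h0.trans (hmono' (empty_subset S))
  have hgap := greedy_gap_le_pow hmono' hsub hk hcard Sg hstep k le_rfl
  have hpow : (1 - 1 / (k : ℝ)) ^ k ≤ 1 / Real.exp 1 := by
    rw [one_div (Real.exp 1), ← Real.exp_neg]
    exact Real.one_sub_div_pow_le_exp_neg (by exact_mod_cast hk)
  rw [hS0] at hgap
  constructor
  · have hc : 0 ≤ (1 - 1 / (k : ℝ)) ^ k := pow_nonneg (Nat.one_sub_one_div_cast_nonneg k) k
    linarith [mul_nonneg hc h0]
  · exact mul_le_mul_of_nonneg_right (by linarith) hFS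

theorem stmt_14 {V : Type*} [Fintype V] [DecidableEq V]
    (F : Finset V → ℝ)
    (hmono : ∀ S₁ S₂ : Finset V, S₁ ⊆ S₂ → F S₁ ≤ F S₂)
    (hsub : ∀ (S₁ S₂ : Finset V) (v : V), S₁ ⊆ S₂ → v ∉ S₂ →
      F (insert v S₁) - F S₁ ≥ F (insert v S₂) - F S₂)
    (h0 : 0 ≤ F ∅)
    (k : ℕ) (hk : 1 ≤ k)
    (Sg : ℕ → Finset V) (hS0 : Sg 0 = ∅)
    (hstep : ∀ j < k, ∃ v : V, Sg (j + 1) = insert v (Sg j) ∧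
      ∀ w : V, F (insert w (Sg j)) ≤ F (insert v (Sg j)))
    (S : Finset V) (hcard : S.card ≤ k) :
    F (Sg k) ≥ (1 - (1 - 1 / (k : ℝ)) ^ k) * F S ∧
      (1 - (1 - 1 / (k : ℝ)) ^ k) * F S ≥ (1 - 1 / Real.exp 1) * F S :=
  stmt_14_general F hmono hsub h0 k hk Sg hS0 hstep S hcard
end

section
/- In a directed graph g (a realization, all edges deterministic) with disjoint seed sets S_r (rumor, higher priority) and S_p (positive), run the synchronous competitive diffusion: at time 0 nodes of S_r are rumor-active and nodes of S_p are positive-active; at each time t, every node activated at t-1 activates each of its currently inactive out-neighbors; a node activated simultaneously by both cascades at the same time step becomes rumor-active. Then a node u becomes rumor-active if and only if dist_g(S_r, u) ≤ dist_g(S_p, u) and dist_g(S_r, u) < ∞, where dist_g(S, u) = min over s ∈ S of the directed shortest-path length from s to u. -/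
/-- `reach g n s u`: there is a directed walk of length exactly `n` from `s` to `u`. -/
def reach {V : Type*} (g : V → V → Prop) : ℕ → V → V → Prop
  | 0, s, u => s = u
  | n + 1, s, u => ∃ w, reach g n s w ∧ g w u

/-- Directed shortest-path distance from the set `S` to the node `u`, valued in `ℕ∞`. -/
noncomputable def edistSet {V : Type*} (g : V → V → Prop) (S : Set V) (u : V) : ℕ∞ :=
  ⨅ (n : ℕ) (_ : ∃ s ∈ S, reach g n s u), (n : ℕ∞)

/-- Synchronous competitive diffusion with rumor priority: at each step every
currently active node activates its inactive out-neighbors, ties won by rumor.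
Returns the pair (rumor-active set, positive-active set) at each time. -/
def diffuse {V : Type*} (g : V → V → Prop) (Sr Sp : Set V) : ℕ → Set V × Set V
  | 0 => (Sr, Sp)
  | t + 1 =>
    let R := (diffuse g Sr Sp t).1
    let P := (diffuse g Sr Sp t).2
    (R ∪ {v | v ∉ R ∪ P ∧ ∃ u ∈ R, g u v},
     P ∪ {v | v ∉ R ∪ P ∧ (∃ u ∈ P, g u v) ∧ ¬∃ u ∈ R, g u v})

/-! With `dᵣ = edistSet g Sr` and `dₚ = edistSet g Sp`, induction on `t` shows that the rumor- and
positive-active sets at time `t` are `{dᵣ ≤ dₚ, dᵣ ≤ t}` and `{dₚ < dᵣ, dₚ ≤ t}`.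
A node `u` first reached at time `t + 1` has `t < dᵣ u` and `t < dₚ u`. If `dᵣ u ≤ dₚ u`, the last
node `w` before `u` on a shortest path from `Sr` has `dᵣ w = t ≤ dₚ w`, so `w` is rumor-active at
time `t` and `u` becomes rumor-active, even when it also has a positive in-neighbour. If
`dₚ u < dᵣ u`, the corresponding node on a shortest path from `Sp` is positive-active at time `t`,
and no in-neighbour of `u` is rumor-active at time `t`, since it would give `dᵣ u ≤ t + 1`. -/

section Distance

variable {V : Type*} {g : V → V → Prop} {S : Set V} {s u w : V} {n : ℕ}

lemma edistSet_le_of_reach (hs : s ∈ S) (h : reach g n s u) : edistSet g S u ≤ n :=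
  iInf₂_le n ⟨s, hs, h⟩

lemma exists_reach_of_edistSet_eq (h : edistSet g S u = n) : ∃ s ∈ S, reach g n s u := by
  set D := {m | ∃ s ∈ S, reach g m s u}
  have hD : D.Nonempty := by
    by_contra hD
    have htop : edistSet g S u = ⊤ := iInf₂_eq_top.mpr fun m hm => (hD ⟨m, hm⟩).elim
    exact ENat.natCast_ne_top n (htop ▸ h).symm
  have hsInf : edistSet g S u = ↑(sInf D) := (ENat.natCast_sInf hD).symm
  rw [hsInf, Nat.cast_inj] at h
  exact h ▸ Nat.sInf_mem hD

lemma edistSet_eq_zero_iff : edistSet g S u = 0 ↔ u ∈ S := by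
  constructor
  · intro h
    obtain ⟨s, hs, rfl⟩ := exists_reach_of_edistSet_eq (n := 0) h
    exact hs
  · intro hu
    exact nonpos_iff_eq_zero.mp (edistSet_le_of_reach (n := 0) hu rfl)

lemma edistSet_le_add_one_of_adj (h : g w u) : edistSet g S u ≤ edistSet g S w + 1 := by
  cases hw : edistSet g S w using ENat.recTopCoe with
  | top => exact le_top
  | coe m =>
    obtain ⟨s, hs, hreach⟩ := exists_reach_of_edistSet_eq hw
    exact_mod_cast edistSet_le_of_reach (n := m + 1) hs ⟨w, hreach, h⟩

lemma exists_adj_edistSet_eq_of_edistSet_eq_add_one (h : edistSet g S u = n + 1) :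
    ∃ w, g w u ∧ edistSet g S w = n := by
  obtain ⟨s, hs, w, hreach, hwu⟩ := exists_reach_of_edistSet_eq (n := n + 1) (by exact_mod_cast h)
  refine ⟨w, hwu, le_antisymm (edistSet_le_of_reach hs hreach) ?_⟩
  have := h ▸ edistSet_le_add_one_of_adj (S := S) hwu
  exact (ENat.add_le_add_iff_right ENat.one_ne_top).mp this

end Distance

def diffuseStep {V : Type*} (g : V → V → Prop) (RP : Set V × Set V) : Set V × Set V :=
  (RP.1 ∪ {v | v ∉ RP.1 ∪ RP.2 ∧ ∃ u ∈ RP.1, g u v},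
   RP.2 ∪ {v | v ∉ RP.1 ∪ RP.2 ∧ (∃ u ∈ RP.2, g u v) ∧ ¬∃ u ∈ RP.1, g u v})

section DiffuseStep

variable {V : Type*} {g : V → V → Prop} {RP : Set V × Set V} {u : V}

lemma mem_diffuseStep_fst :
    u ∈ (diffuseStep g RP).1 ↔ u ∈ RP.1 ∨ u ∉ RP.1 ∪ RP.2 ∧ ∃ w ∈ RP.1, g w u := Iff.rfl

lemma mem_diffuseStep_snd :
    u ∈ (diffuseStep g RP).2 ↔
      u ∈ RP.2 ∨ u ∉ RP.1 ∪ RP.2 ∧ (∃ w ∈ RP.2, g w u) ∧ ¬∃ w ∈ RP.1, g w u := Iff.rfl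

lemma diffuse_succ {Sr Sp : Set V} {t : ℕ} :
    diffuse g Sr Sp (t + 1) = diffuseStep g (diffuse g Sr Sp t) := rfl

end DiffuseStep

def distActivation {V : Type*} (g : V → V → Prop) (Sr Sp : Set V) (t : ℕ) : Set V × Set V :=
  ({u | edistSet g Sr u ≤ edistSet g Sp u ∧ edistSet g Sr u ≤ t},
   {u | edistSet g Sp u < edistSet g Sr u ∧ edistSet g Sp u ≤ t})

section DistActivation

variable {V : Type*} {g : V → V → Prop} {Sr Sp : Set V} {t : ℕ} {u : V}

lemma distActivation_zero (hdisj : Disjoint Sr Sp) : distActivation g Sr Sp 0 = (Sr, Sp) := by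
  ext u
  · simp only [distActivation, Set.mem_ofPred_eq, Nat.cast_zero, nonpos_iff_eq_zero,
      edistSet_eq_zero_iff, and_iff_right_iff_imp]
    intro h
    rw [edistSet_eq_zero_iff.mpr h]
    exact zero_le
  · simp only [distActivation, Set.mem_ofPred_eq, Nat.cast_zero, nonpos_iff_eq_zero,
      edistSet_eq_zero_iff, and_iff_right_iff_imp]
    intro h
    rw [edistSet_eq_zero_iff.mpr h, pos_iff_ne_zero, Ne, edistSet_eq_zero_iff]
    exact Set.disjoint_right.mp hdisj h

lemma notMem_distActivation_iff :
    u ∉ (distActivation g Sr Sp t).1 ∪ (distActivation g Sr Sp t).2 ↔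
      (t : ℕ∞) < edistSet g Sr u ∧ (t : ℕ∞) < edistSet g Sp u := by
  simp only [distActivation, Set.mem_union, Set.mem_ofPred_eq]
  constructor
  · intro h
    rcases le_or_gt (edistSet g Sr u) (edistSet g Sp u) with hle | hlt
    · have hr : (t : ℕ∞) < edistSet g Sr u := lt_of_not_ge fun h' => h (Or.inl ⟨hle, h'⟩)
      exact ⟨hr, hr.trans_le hle⟩
    · have hp : (t : ℕ∞) < edistSet g Sp u := lt_of_not_ge fun h' => h (Or.inr ⟨hlt, h'⟩)
      exact ⟨hp.trans hlt, hp⟩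
  · rintro ⟨hr, hp⟩ (⟨-, h⟩ | ⟨-, h⟩)
    · exact h.not_gt hr
    · exact h.not_gt hp

lemma exists_adj_mem_distActivation_fst_iff (hr : (t : ℕ∞) < edistSet g Sr u)
    (hp : (t : ℕ∞) < edistSet g Sp u) :
    (∃ w ∈ (distActivation g Sr Sp t).1, g w u) ↔ u ∈ (distActivation g Sr Sp (t + 1)).1 := by
  simp only [distActivation, Set.mem_ofPred_eq, Nat.cast_succ]
  rw [← ENat.natCast_add_one_le_iff] at hp
  constructor
  · rintro ⟨w, ⟨-, hw⟩, hwu⟩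
    have hdr : edistSet g Sr u ≤ t + 1 :=
      (edistSet_le_add_one_of_adj hwu).trans (by gcongr)
    exact ⟨hdr.trans hp, hdr⟩
  · rintro ⟨hle, hdr⟩
    have heq : edistSet g Sr u = t + 1 := le_antisymm hdr (ENat.natCast_add_one_le_iff.mpr hr)
    obtain ⟨w, hwu, hw⟩ := exists_adj_edistSet_eq_of_edistSet_eq_add_one heq
    refine ⟨w, ⟨?_, hw.le⟩, hwu⟩
    have := (heq ▸ hle).trans (edistSet_le_add_one_of_adj (S := Sp) hwu)
    exact hw ▸ (ENat.add_le_add_iff_right ENat.one_ne_top).mp this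

lemma exists_adj_mem_distActivation_snd_iff (hr : (t : ℕ∞) < edistSet g Sr u)
    (hp : (t : ℕ∞) < edistSet g Sp u) :
    ((∃ w ∈ (distActivation g Sr Sp t).2, g w u) ∧ ¬∃ w ∈ (distActivation g Sr Sp t).1, g w u) ↔
      u ∈ (distActivation g Sr Sp (t + 1)).2 := by
  rw [exists_adj_mem_distActivation_fst_iff hr hp]
  simp only [distActivation, Set.mem_ofPred_eq, Nat.cast_succ, not_and]
  constructor
  · rintro ⟨⟨w, ⟨-, hw⟩, hwu⟩, hnot⟩
    have hdp : edistSet g Sp u ≤ t + 1 :=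
      (edistSet_le_add_one_of_adj hwu).trans (by gcongr)
    exact ⟨lt_of_not_ge fun hle => hnot hle (hle.trans hdp), hdp⟩
  · rintro ⟨hlt, hdp⟩
    have heq : edistSet g Sp u = t + 1 := le_antisymm hdp (ENat.natCast_add_one_le_iff.mpr hp)
    obtain ⟨w, hwu, hw⟩ := exists_adj_edistSet_eq_of_edistSet_eq_add_one heq
    refine ⟨⟨w, ⟨?_, hw.le⟩, hwu⟩, fun hle => absurd hlt hle.not_gt⟩
    have := (heq ▸ hlt).trans_le (edistSet_le_add_one_of_adj (S := Sr) hwu)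
    exact hw ▸ (ENat.add_lt_add_iff_right ENat.one_ne_top).mp this

lemma mem_distActivation_succ_iff_of_mem_union
    (h : u ∈ (distActivation g Sr Sp t).1 ∪ (distActivation g Sr Sp t).2) :
    (u ∈ (distActivation g Sr Sp (t + 1)).1 ↔ u ∈ (distActivation g Sr Sp t).1) ∧
      (u ∈ (distActivation g Sr Sp (t + 1)).2 ↔ u ∈ (distActivation g Sr Sp t).2) := by
  have hmono : (t : ℕ∞) ≤ ↑(t + 1) := by exact_mod_cast t.le_succ
  simp only [distActivation, Set.mem_union, Set.mem_ofPred_eq] at h ⊢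
  rcases h with ⟨hle, hr⟩ | ⟨hlt, hp⟩
  · exact ⟨⟨fun _ => ⟨hle, hr⟩, fun _ => ⟨hle, hr.trans hmono⟩⟩,
      ⟨fun h' => absurd hle h'.1.not_ge, fun h' => absurd hle h'.1.not_ge⟩⟩
  · exact ⟨⟨fun h' => absurd hlt h'.1.not_gt, fun h' => absurd hlt h'.1.not_gt⟩,
      ⟨fun _ => ⟨hlt, hp⟩, fun _ => ⟨hlt, hp.trans hmono⟩⟩⟩

lemma diffuseStep_distActivation :
    diffuseStep g (distActivation g Sr Sp t) = distActivation g Sr Sp (t + 1) := by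
  ext u
  · rw [mem_diffuseStep_fst]
    by_cases h : u ∈ (distActivation g Sr Sp t).1 ∪ (distActivation g Sr Sp t).2
    · simp only [h, (mem_distActivation_succ_iff_of_mem_union h).1, not_true_eq_false,
        false_and, or_false]
    · obtain ⟨hr, hp⟩ := notMem_distActivation_iff.mp h
      simp only [h, not_false_eq_true, true_and, exists_adj_mem_distActivation_fst_iff hr hp]
      exact or_iff_right fun hu => h (Or.inl hu)
  · rw [mem_diffuseStep_snd]
    by_cases h : u ∈ (distActivation g Sr Sp t).1 ∪ (distActivation g Sr Sp t).2
    · simp only [h, (mem_distActivation_succ_iff_of_mem_union h).2, not_true_eq_false,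
        false_and, or_false]
    · obtain ⟨hr, hp⟩ := notMem_distActivation_iff.mp h
      simp only [h, not_false_eq_true, true_and, exists_adj_mem_distActivation_snd_iff hr hp]
      exact or_iff_right fun hu => h (Or.inr hu)

lemma diffuse_eq_distActivation (hdisj : Disjoint Sr Sp) (t : ℕ) :
    diffuse g Sr Sp t = distActivation g Sr Sp t := by
  induction t with
  | zero => exact (distActivation_zero hdisj).symm
  | succ t ih => rw [diffuse_succ, ih, diffuseStep_distActivation]

end DistActivation

theorem stmt_16_general {V : Type*} (g : V → V → Prop)
    (Sr Sp : Set V) (hdisj : Disjoint Sr Sp) (u : V) :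
    (∃ t : ℕ, u ∈ (diffuse g Sr Sp t).1) ↔
      edistSet g Sr u ≤ edistSet g Sp u ∧ edistSet g Sr u ≠ ⊤ := by
  simp only [diffuse_eq_distActivation hdisj, distActivation, Set.mem_ofPred_eq, exists_and_left]
  refine and_congr_right fun _ => ⟨fun ⟨t, ht⟩ => ne_top_of_le_ne_top (ENat.natCast_ne_top t) ht,
    fun h => ⟨_, (ENat.natCast_toNat h).ge⟩⟩

theorem stmt_16 {V : Type*} [Fintype V] (g : V → V → Prop)
    (Sr Sp : Set V) (hdisj : Disjoint Sr Sp) (u : V) :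
    (∃ t : ℕ, u ∈ (diffuse g Sr Sp t).1) ↔
      edistSet g Sr u ≤ edistSet g Sp u ∧ edistSet g Sr u ≠ ⊤ :=
  stmt_16_general g Sr Sp hdisj u
end
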